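/- Let 𝓗 = (V, 𝓔) be a hypergraph with |V| ≥ 2, ⋃𝓔 = V, and whose automorphism group acts 2-set transitively on V (for every pair of 2-element subsets e, e' of V there is an automorphism mapping e to e'). Then for every e, e' ∈ [V]², 𝓗_e ≅ 𝓗_{e'}, and consequently f_𝓗 is irreducible. -/

import Mathlib

/-!
Both claims are instances of one principle: a quantity attached to ordered pairs `(i, j)` of
distinct vertices that is transported by automorphisms and is unchanged (up to the relevant
equivalence) by swapping `i` and `j` is, under 2-set transitivity, the same for all pairs. For the
hypergraphs `𝓗_e` this gives the first claim directly.

For `f_𝓗`, every vertex lies in an edge, so `f_𝓗` depends on all of its variables. A minor of `f_𝓗`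
whose substitution of variables is injective is equivalent to `f_𝓗`, so every strict minor factors
through an identification `f_𝓗(a ∘ (j ↦ i))` of two variables. By the principle above all these
identifications are minors of a single one, which loses a variable and is therefore a strict minor
of `f_𝓗`: it is the unique lower cover.
-/

open Finset

abbrev BF := Σ n : ℕ, (Fin n → Bool) → Bool

def Minor (g f : BF) : Prop :=
  ∃ σ : Fin f.1 → Fin g.1, ∀ a : Fin g.1 → Bool, g.2 a = f.2 (a ∘ σ)

def EquivBF (f g : BF) : Prop := Minor f g ∧ Minor g f

def StrictMinor (g f : BF) : Prop := Minor g f ∧ ¬ Minor f g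

def Essential {n : ℕ} (f : (Fin n → Bool) → Bool) (i : Fin n) : Prop :=
  ∃ a b : Fin n → Bool, (∀ j, j ≠ i → a j = b j) ∧ f a ≠ f b

noncomputable def essArity {n : ℕ} (f : (Fin n → Bool) → Bool) : ℕ :=
  Nat.card {i : Fin n // Essential f i}

noncomputable def gapBF (f : BF) : ℕ :=
  sInf {d | ∃ g : BF, StrictMinor g f ∧ d = essArity f.2 - essArity g.2}

def fH {n : ℕ} (𝓔 : Finset (Finset (Fin n))) : (Fin n → Bool) → Bool :=
  fun a => decide (Odd (𝓔.filter (fun E => ∀ i ∈ E, a i = true)).card)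

def IsQuotientMap {n m : ℕ} (𝓔 : Finset (Finset (Fin n)))
    (𝓔' : Finset (Finset (Fin m))) (h : Fin m → Fin n) : Prop :=
  ∀ s : Finset (Fin n), s ∈ 𝓔 ↔ Odd (𝓔'.filter (fun t => t.image h = s)).card

abbrev HG := Σ n : ℕ, Finset (Finset (Fin n))

def HMinor (H H' : HG) : Prop := ∃ h : Fin H'.1 → Fin H.1, IsQuotientMap H.2 H'.2 h

def identEdges {n : ℕ} (𝓔 : Finset (Finset (Fin n))) (i j : Fin n) :
    Finset (Finset (Fin n)) :=
  Finset.univ.filter (fun E => j ∉ E ∧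
    ((i ∉ E ∧ E ∈ 𝓔) ∨
     (i ∈ E ∧ Odd ((if insert j E ∈ 𝓔 then 1 else 0) +
        (if E ∈ 𝓔 then 1 else 0) + (if insert j (E.erase i) ∈ 𝓔 then 1 else 0)))))

def EdgeIso {n : ℕ} (𝓔 𝓔' : Finset (Finset (Fin n))) : Prop :=
  ∃ φ : Fin n ≃ Fin n, ∀ s : Finset (Fin n), s.image φ ∈ 𝓔' ↔ s ∈ 𝓔

def IrreducibleBF (f : BF) : Prop :=
  ∃ f' : BF, StrictMinor f' f ∧ ∀ g : BF, StrictMinor g f → Minor g f'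

def IsAutomorphism {n : ℕ} (𝓔 : Finset (Finset (Fin n))) (φ : Fin n ≃ Fin n) : Prop :=
  ∀ E : Finset (Fin n), E.image φ ∈ 𝓔 ↔ E ∈ 𝓔

lemma Finset.pair_eq_pair_iff {α : Type*} [DecidableEq α] {x y z w : α} :
    ({x, y} : Finset α) = {z, w} ↔ x = z ∧ y = w ∨ x = w ∧ y = z := by
  rw [← Finset.coe_inj, Finset.coe_pair, Finset.coe_pair, Set.pair_eq_pair_iff]

lemma rel_of_twoSetTransitive {n : ℕ} {α : Type*} {𝓔 : Finset (Finset (Fin n))}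
    {r : α → α → Prop} [IsTrans α r] (F : Fin n → Fin n → α)
    (hswap : ∀ i j, i ≠ j → r (F i j) (F j i))
    (haut : ∀ φ, IsAutomorphism 𝓔 φ → ∀ i j, r (F i j) (F (φ i) (φ j)))
    (htrans : ∀ i j i' j' : Fin n, i ≠ j → i' ≠ j' →
      ∃ φ : Fin n ≃ Fin n, IsAutomorphism 𝓔 φ ∧
        ({i, j} : Finset (Fin n)).image φ = {i', j'})
    {i j i' j' : Fin n} (hij : i ≠ j) (hij' : i' ≠ j') : r (F i j) (F i' j') := by
  obtain ⟨φ, hφ, himg⟩ := htrans i j i' j' hij hij'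
  rw [Finset.image_insert, Finset.image_singleton, Finset.pair_eq_pair_iff] at himg
  rcases himg with ⟨hi, hj⟩ | ⟨hi, hj⟩
  · simpa only [hi, hj] using haut φ hφ i j
  · exact _root_.trans (by simpa only [hi, hj] using haut φ hφ i j) (hswap j' i' hij'.symm)

lemma EdgeIso.trans {n : ℕ} {𝓐 𝓑 𝓒 : Finset (Finset (Fin n))}
    (h₁ : EdgeIso 𝓐 𝓑) (h₂ : EdgeIso 𝓑 𝓒) : EdgeIso 𝓐 𝓒 := by
  obtain ⟨φ, hφ⟩ := h₁
  obtain ⟨ψ, hψ⟩ := h₂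
  refine ⟨φ.trans ψ, fun s => ?_⟩
  rw [Equiv.coe_trans, ← Finset.image_image, hψ, hφ]

instance {n : ℕ} : IsTrans (Finset (Finset (Fin n))) EdgeIso := ⟨fun _ _ _ => EdgeIso.trans⟩

lemma mem_identEdges {n : ℕ} {𝓔 : Finset (Finset (Fin n))} {i j : Fin n} {E : Finset (Fin n)} :
    E ∈ identEdges 𝓔 i j ↔ j ∉ E ∧
      ((i ∉ E ∧ E ∈ 𝓔) ∨
       (i ∈ E ∧ Odd ((if insert j E ∈ 𝓔 then 1 else 0) +
          (if E ∈ 𝓔 then 1 else 0) + (if insert j (E.erase i) ∈ 𝓔 then 1 else 0)))) := by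
  simp only [identEdges, mem_filter, mem_univ, true_and]

lemma edgeIso_identEdges_of_isAutomorphism {n : ℕ} {𝓔 : Finset (Finset (Fin n))}
    {φ : Fin n ≃ Fin n} (hφ : IsAutomorphism 𝓔 φ) (i j : Fin n) :
    EdgeIso (identEdges 𝓔 i j) (identEdges 𝓔 (φ i) (φ j)) := by
  refine ⟨φ, fun s => ?_⟩
  rw [mem_identEdges, mem_identEdges, φ.injective.mem_finset_image, φ.injective.mem_finset_image,
    ← Finset.image_insert, ← Finset.image_erase φ.injective, ← Finset.image_insert]
  simp only [hφ _]

lemma edgeIso_identEdges_swap {n : ℕ} (𝓔 : Finset (Finset (Fin n))) {i j : Fin n}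
    (hij : i ≠ j) : EdgeIso (identEdges 𝓔 i j) (identEdges 𝓔 j i) := by
  refine ⟨Equiv.swap i j, fun s => ?_⟩
  rw [mem_identEdges, mem_identEdges]
  by_cases hjs : j ∈ s
  · have hi : i ∈ s.image (Equiv.swap i j) :=
      Finset.mem_image.mpr ⟨j, hjs, Equiv.swap_apply_right i j⟩
    simp [hi, hjs]
  by_cases his : i ∈ s
  · have himg : s.image (Equiv.swap i j) = insert j (s.erase i) := by
      rw [← Finset.coe_inj, Finset.coe_image, Equiv.image_swap_of_mem_of_notMem his hjs]
      ext k
      simp only [Set.mem_sdiff, Set.mem_insert_iff, Set.mem_singleton_iff, coe_insert, coe_erase]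
      grind
    have hjt : j ∈ insert j (s.erase i) := Finset.mem_insert_self j _
    have hit : i ∉ insert j (s.erase i) := by simp [hij]
    rw [himg, Finset.insert_comm, Finset.insert_erase his, Finset.erase_insert (by simp [hjs]),
      Finset.insert_erase his]
    simp only [hjt, hit, his, hjs]
    grind
  · have himg : s.image (Equiv.swap i j) = s := by
      refine (Finset.image_congr fun k hk => ?_).trans Finset.image_id'
      exact Equiv.swap_apply_of_ne_of_ne (ne_of_mem_of_not_mem hk his) (ne_of_mem_of_not_mem hk hjs)
    simp [himg, his, hjs]

lemma Minor.trans {f g h : BF} (hhg : Minor h g) (hgf : Minor g f) : Minor h f := by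
  obtain ⟨ρ, hρ⟩ := hhg
  obtain ⟨σ, hσ⟩ := hgf
  exact ⟨ρ ∘ σ, fun a => (hρ a).trans (hσ _)⟩

instance : IsTrans BF Minor := ⟨fun _ _ _ h₁ h₂ => h₁.trans h₂⟩

lemma Minor.symm_of_injective {g f : BF} [Nonempty (Fin f.1)] {σ : Fin f.1 → Fin g.1}
    (hσ : ∀ a, g.2 a = f.2 (a ∘ σ)) (hinj : σ.Injective) : Minor f g := by
  refine ⟨Function.invFun σ, fun b => ?_⟩
  rw [hσ, Function.comp_assoc, Function.invFun_comp hinj, Function.comp_id]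

lemma exists_essential_mem_of_eqOn_compl {n : ℕ} (f : (Fin n → Bool) → Bool)
    (s : Finset (Fin n)) {x y : Fin n → Bool} (hxy : ∀ k ∉ s, x k = y k) (hne : f x ≠ f y) :
    ∃ k ∈ s, Essential f k := by
  induction s using Finset.induction_on generalizing x with
  | empty =>
    exact absurd (congrArg f (funext fun k => hxy k (Finset.notMem_empty k))) hne
  | insert k s _ ih =>
    set z := Function.update x k (y k)
    by_cases hxz : f x = f z
    · have hzy (l) (hl : l ∉ s) : z l = y l := by
        by_cases hlk : l = k
        · simp [z, hlk]
        · simp [z, hlk, hxy l (by simp [hlk, hl])]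
      obtain ⟨l, hl, hess⟩ := ih hzy (hxz ▸ hne)
      exact ⟨l, Finset.mem_insert_of_mem hl, hess⟩
    · exact ⟨k, Finset.mem_insert_self k s, x, z, fun l hl => by simp [z, hl], hxz⟩

lemma exists_essential_of_ne {n : ℕ} (f : (Fin n → Bool) → Bool) {x y : Fin n → Bool}
    (hne : f x ≠ f y) : ∃ k, x k ≠ y k ∧ Essential f k := by
  obtain ⟨k, hk, hess⟩ := exists_essential_mem_of_eqOn_compl f {k | x k ≠ y k}
    (fun k hk => by simpa using hk) hne
  exact ⟨k, by simpa using hk, hess⟩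

lemma essArity_le_of_minor {g f : BF} (h : Minor g f) : essArity g.2 ≤ essArity f.2 := by
  obtain ⟨σ, hσ⟩ := h
  have hhit (i : {i // Essential g.2 i}) : ∃ k : {k // Essential f.2 k}, σ k = i := by
    obtain ⟨i, a, b, hab, hne⟩ := i
    obtain ⟨k, hk, hess⟩ := exists_essential_of_ne f.2 (x := a ∘ σ) (y := b ∘ σ)
      (by rwa [← hσ, ← hσ])
    exact ⟨⟨k, hess⟩, by_contra fun h => hk (hab _ h)⟩
  choose F hF using hhit
  refine Nat.card_le_card_of_injective F fun i₁ i₂ h => Subtype.ext ?_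
  rw [← hF i₁, ← hF i₂, h]

lemma essArity_eq_of_forall_essential {n : ℕ} {f : (Fin n → Bool) → Bool}
    (h : ∀ i, Essential f i) : essArity f = n := by
  rw [essArity, Nat.card_congr (Equiv.subtypeUnivEquiv h), Nat.card_eq_fintype_card,
    Fintype.card_fin]

lemma fH_indicator {n : ℕ} (𝓔 : Finset (Finset (Fin n))) (S : Finset (Fin n)) :
    fH 𝓔 (fun k => decide (k ∈ S)) = decide (Odd (𝓔.filter (· ⊆ S)).card) := by
  simp only [fH, decide_eq_true_eq, Finset.subset_iff]

/-- Toggling `i` inside an edge `E₀` that is minimal among the edges through `i` adds or removes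
exactly the edge `E₀` from the edges below the input. -/
lemma essential_fH {n : ℕ} {𝓔 : Finset (Finset (Fin n))} (hcover : 𝓔.sup id = Finset.univ)
    (i : Fin n) : Essential (fH 𝓔) i := by
  obtain ⟨E₁, hE₁, hiE₁⟩ := Finset.mem_sup.mp (hcover ▸ Finset.mem_univ i)
  obtain ⟨E₀, hE₀, hmin⟩ := Finset.exists_min_image (𝓔.filter (i ∈ ·)) Finset.card
    ⟨E₁, Finset.mem_filter.mpr ⟨hE₁, hiE₁⟩⟩
  rw [Finset.mem_filter] at hE₀
  have hsplit : 𝓔.filter (· ⊆ E₀) = insert E₀ (𝓔.filter (· ⊆ E₀.erase i)) := by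
    ext E
    simp only [Finset.mem_filter, Finset.mem_insert, Finset.subset_erase]
    constructor
    · rintro ⟨hE, hEE₀⟩
      by_cases hiE : i ∈ E
      · exact .inl (Finset.eq_of_subset_of_card_le hEE₀ (hmin E (by simp [hE, hiE])))
      · exact .inr ⟨hE, hEE₀, hiE⟩
    · rintro (rfl | ⟨hE, hEE₀, -⟩)
      exacts [⟨hE₀.1, subset_rfl⟩, ⟨hE, hEE₀⟩]
  have hE₀_notMem : E₀ ∉ 𝓔.filter (· ⊆ E₀.erase i) := by
    simp [Finset.subset_erase, hE₀.2]
  refine ⟨fun k => decide (k ∈ E₀.erase i), fun k => decide (k ∈ E₀),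
    fun k hk => by simp [hk], ?_⟩
  rw [fH_indicator, fH_indicator, hsplit, Finset.card_insert_of_notMem hE₀_notMem]
  simp only [ne_eq, decide_eq_decide, Nat.odd_add_one]
  tauto

lemma fH_comp_of_isAutomorphism {n : ℕ} {𝓔 : Finset (Finset (Fin n))} {φ : Fin n ≃ Fin n}
    (hφ : IsAutomorphism 𝓔 φ) (b : Fin n → Bool) : fH 𝓔 (b ∘ φ) = fH 𝓔 b := by
  have himage_symm (F : Finset (Fin n)) : (F.image φ.symm).image φ = F := by
    simp [Finset.image_image]
  unfold fH
  congr 2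
  refine Finset.card_nbij' (Finset.image φ) (Finset.image φ.symm) ?_ ?_ ?_ ?_
  · intro E hE
    simp only [Finset.coe_filter, Set.mem_ofPred_eq, Finset.forall_mem_image] at hE ⊢
    exact ⟨(hφ E).mpr hE.1, hE.2⟩
  · intro F hF
    simp only [Finset.coe_filter, Set.mem_ofPred_eq, Finset.forall_mem_image] at hF ⊢
    refine ⟨(hφ _).mp ((himage_symm F).symm ▸ hF.1), fun k hk => by simpa using hF.2 _ hk⟩
  · intro E _
    simp [Finset.image_image]
  · intro F _
    exact himage_symm F

def identifyVars {n : ℕ} (f : (Fin n → Bool) → Bool) (i j : Fin n) : (Fin n → Bool) → Bool :=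
  fun a => f (a ∘ Function.update id j i)

section identifyVars

variable {n : ℕ} (f : (Fin n → Bool) → Bool)

lemma minor_identifyVars (i j : Fin n) : Minor ⟨n, identifyVars f i j⟩ ⟨n, f⟩ :=
  ⟨Function.update id j i, fun _ => rfl⟩

lemma essArity_identifyVars_lt {i j : Fin n} (hij : i ≠ j) :
    essArity (identifyVars f i j) < n := by
  have hj : ¬ Essential (identifyVars f i j) j := by
    rintro ⟨a, b, hab, hne⟩
    refine hne (congrArg f (funext fun k => hab _ ?_))
    rw [Function.update_apply]
    split_ifs with hk
    exacts [hij, hk]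
  calc essArity (identifyVars f i j) ≤ Nat.card {k : Fin n // k ≠ j} :=
        Finite.card_le_of_embedding
          (Subtype.impEmbedding _ _ fun k hk hkj => hj (hkj ▸ hk))
    _ < n := by
        rw [Nat.card_eq_fintype_card, Fintype.card_subtype_compl, Fintype.card_subtype_eq,
          Fintype.card_fin]
        omega

lemma minor_identifyVars_of_apply_eq {g : BF} {σ : Fin n → Fin g.1}
    (hσ : ∀ a, g.2 a = f (a ∘ σ)) {i j : Fin n} (hij : σ i = σ j) :
    Minor g ⟨n, identifyVars f i j⟩ := by
  refine ⟨σ, fun a => (hσ a).trans (congrArg f (funext fun k => ?_))⟩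
  by_cases hk : k = j <;> simp [hk, hij]

lemma minor_identifyVars_swap (i j : Fin n) :
    Minor ⟨n, identifyVars f i j⟩ ⟨n, identifyVars f j i⟩ := by
  refine ⟨Equiv.swap i j, fun (a : Fin n → Bool) => congrArg f (funext fun k => ?_)⟩
  by_cases hki : k = i <;> by_cases hkj : k = j <;> simp_all [Equiv.swap_apply_of_ne_of_ne]

lemma minor_identifyVars_of_comp_eq {φ : Fin n ≃ Fin n} (hφ : ∀ b, f (b ∘ φ) = f b)
    (i j : Fin n) : Minor ⟨n, identifyVars f i j⟩ ⟨n, identifyVars f (φ i) (φ j)⟩ := by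
  refine ⟨φ.symm, fun (a : Fin n → Bool) => ?_⟩
  dsimp only [identifyVars]
  rw [← hφ ((a ∘ φ.symm) ∘ _)]
  congr 1
  funext k
  by_cases hk : k = j <;> simp [hk]

end identifyVars

lemma irreducibleBF_of_minor_identifyVars {n : ℕ} {f : (Fin n → Bool) → Bool}
    (hess : ∀ i, Essential f i) {i₀ j₀ : Fin n} (hij₀ : i₀ ≠ j₀)
    (h : ∀ i j, i ≠ j → Minor ⟨n, identifyVars f i j⟩ ⟨n, identifyVars f i₀ j₀⟩) :
    IrreducibleBF ⟨n, f⟩ := by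
  have : Nonempty (Fin n) := ⟨i₀⟩
  refine ⟨⟨n, identifyVars f i₀ j₀⟩, ⟨minor_identifyVars f i₀ j₀, fun hf => ?_⟩, ?_⟩
  · have hle : n ≤ essArity (identifyVars f i₀ j₀) :=
      (essArity_eq_of_forall_essential hess).ge.trans (essArity_le_of_minor hf)
    exact (essArity_identifyVars_lt f hij₀).not_ge hle
  · rintro g ⟨⟨σ, hσ⟩, hnot⟩
    obtain ⟨i, j, hσij, hij⟩ : ∃ i j, σ i = σ j ∧ i ≠ j := by
      by_contra! hinj
      exact hnot (Minor.symm_of_injective hσ hinj)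
    exact (minor_identifyVars_of_apply_eq f hσ hσij).trans (h i j hij)

theorem two_set_transitive_implies_irreducible (n : ℕ)
    (𝓔 : Finset (Finset (Fin n))) (hn : 2 ≤ n) (hcover : 𝓔.sup id = Finset.univ)
    (htrans : ∀ i j i' j' : Fin n, i ≠ j → i' ≠ j' →
      ∃ φ : Fin n ≃ Fin n, (∀ E : Finset (Fin n), E.image φ ∈ 𝓔 ↔ E ∈ 𝓔) ∧
        ({i, j} : Finset (Fin n)).image φ = {i', j'}) :
    (∀ i j i' j' : Fin n, i ≠ j → i' ≠ j' →
      EdgeIso (identEdges 𝓔 i j) (identEdges 𝓔 i' j')) ∧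
    IrreducibleBF ⟨n, fH 𝓔⟩ := by
  constructor
  · intro i j i' j' hij hij'
    exact rel_of_twoSetTransitive (identEdges 𝓔) (fun _ _ => edgeIso_identEdges_swap 𝓔)
      (fun _ hφ => edgeIso_identEdges_of_isAutomorphism hφ) htrans hij hij'
  · have hij₀ : (⟨0, by omega⟩ : Fin n) ≠ ⟨1, hn⟩ := by simp
    refine irreducibleBF_of_minor_identifyVars (essential_fH hcover) hij₀ fun i j hij => ?_
    exact rel_of_twoSetTransitive (fun i j => (⟨n, identifyVars (fH 𝓔) i j⟩ : BF))
      (fun i j _ => minor_identifyVars_swap _ i j)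
      (fun _ hφ => minor_identifyVars_of_comp_eq _ (fH_comp_of_isAutomorphism hφ)) htrans hij hij₀
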